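/- arXiv:1602.00478 — 8 statements merged into one kernel-verified Lean document; each statement's English description precedes it below -/
import Mathlib

section
/- The product of two strictly stochastically ordered (N+1)x(N+1) stochastic matrices is strictly stochastically ordered, and any convex combination μA+(1−μ)B with μ∈(0,1) of two strictly stochastically ordered stochastic matrices is strictly stochastically ordered. -/
open Finset

/-- Tail sum of a vector in `ℝ^{N+1}` from index `n`. -/
def tailSum (N : ℕ) (u : Fin (N+1) → ℝ) (n : ℕ) : ℝ :=
  ∑ i : Fin (N+1), if n ≤ (i : ℕ) then u i else 0

/-- A matrix is stochastic: nonnegative entries and rows summing to one. -/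
def IsStochastic (N : ℕ) (A : Matrix (Fin (N+1)) (Fin (N+1)) ℝ) : Prop :=
  (∀ i j, 0 ≤ A i j) ∧ (∀ i, ∑ j, A i j = 1)

/-- A matrix is strictly stochastically ordered: for `i > j` and all `n ∈ {1,...,N}`,
the tail sum of row `i` from `n` strictly exceeds that of row `j`. -/
def IsSSO (N : ℕ) (A : Matrix (Fin (N+1)) (Fin (N+1)) ℝ) : Prop :=
  ∀ i j : Fin (N+1), j < i → ∀ n : ℕ, 1 ≤ n → n ≤ N →
    tailSum N (A j) n < tailSum N (A i) n

/-! Tail sums are linear in the row, so strictly stochastically ordered matrices form a convex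
cone. For the product, summation by parts gives
`∑ₖ dₖ gₖ = (∑ₖ dₖ) g₀ + ∑_{m ≥ 1} T_m(d) (g_m - g_{m-1})`, with `T_m` the tail sum from `m`.
Take `d = A i - A j` for `j < i`, so that `∑ₖ dₖ = 0` and `T_m(d) > 0`, and `gₖ = T_n(B k)`,
which is strictly increasing in `k`; then `T_n((A * B) i) - T_n((A * B) j) = ∑ₖ dₖ gₖ > 0`. -/

lemma tailSum_add (N : ℕ) (u v : Fin (N+1) → ℝ) (n : ℕ) :
    tailSum N (u + v) n = tailSum N u n + tailSum N v n := by
  simp only [tailSum, Pi.add_apply, ← sum_add_distrib, ← ite_add_zero]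

lemma tailSum_smul (N : ℕ) (c : ℝ) (u : Fin (N+1) → ℝ) (n : ℕ) :
    tailSum N (c • u) n = c * tailSum N u n := by
  simp only [tailSum, Pi.smul_apply, smul_eq_mul, mul_sum, mul_ite, mul_zero]

lemma tailSum_mul_apply (N : ℕ) (A B : Matrix (Fin (N+1)) (Fin (N+1)) ℝ) (i : Fin (N+1))
    (n : ℕ) :
    tailSum N ((A * B) i) n = ∑ k, A i k * tailSum N (B k) n := by
  simp only [tailSum, Matrix.mul_apply, mul_sum, mul_ite, mul_zero]
  rw [sum_comm]
  simp only [sum_ite_irrel, sum_const_zero]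

lemma tailSum_zero (N : ℕ) (u : Fin (N+1) → ℝ) : tailSum N u 0 = ∑ i, u i := by
  simp [tailSum]

lemma tailSum_succ (N : ℕ) (u : Fin (N+2) → ℝ) (m : ℕ) :
    tailSum (N+1) u (m+1) = tailSum N (fun i => u i.succ) m := by
  simp [tailSum, Fin.sum_univ_succ]

lemma sum_mul_eq_sum_mul_add_sum_tailSum_mul (N : ℕ) (d g : Fin (N+1) → ℝ) :
    ∑ k, d k * g k = (∑ k, d k) * g 0 +
      ∑ i : Fin N, tailSum N d (i+1) * (g i.succ - g i.castSucc) := by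
  induction N with
  | zero => simp
  | succ N ih =>
    rw [Fin.sum_univ_succ, ih, Fin.sum_univ_succ (fun i : Fin (N+1) => _ * _)]
    simp only [tailSum_succ, Fin.val_succ, Fin.val_zero, Fin.sum_univ_succ d, tailSum_zero,
      Fin.castSucc_zero, Fin.castSucc_succ]
    ring

lemma sum_mul_lt_sum_mul_of_tailSum_lt {N : ℕ} (hN : 0 < N) {a b g : Fin (N+1) → ℝ}
    (hsum : ∑ k, a k = ∑ k, b k)
    (htail : ∀ m, 1 ≤ m → m ≤ N → tailSum N b m < tailSum N a m) (hg : StrictMono g) :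
    ∑ k, b k * g k < ∑ k, a k * g k := by
  rw [sum_mul_eq_sum_mul_add_sum_tailSum_mul N b, sum_mul_eq_sum_mul_add_sum_tailSum_mul N a,
    hsum]
  have : Nonempty (Fin N) := ⟨⟨0, hN⟩⟩
  gcongr ?_ + ?_
  refine sum_lt_sum_of_nonempty univ_nonempty fun i _ => ?_
  exact mul_lt_mul_of_pos_right (htail (i + 1) (by omega) (by omega))
    (sub_pos.2 (hg i.castSucc_lt_succ))

lemma IsSSO.add {N : ℕ} {A B : Matrix (Fin (N+1)) (Fin (N+1)) ℝ} (hA : IsSSO N A)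
    (hB : IsSSO N B) : IsSSO N (A + B) := by
  intro i j hij n hn1 hnN
  change tailSum N (A j + B j) n < tailSum N (A i + B i) n
  rw [tailSum_add, tailSum_add]
  exact add_lt_add (hA i j hij n hn1 hnN) (hB i j hij n hn1 hnN)

lemma IsSSO.smul {N : ℕ} {A : Matrix (Fin (N+1)) (Fin (N+1)) ℝ} (hA : IsSSO N A) {c : ℝ}
    (hc : 0 < c) : IsSSO N (c • A) := by
  intro i j hij n hn1 hnN
  change tailSum N (c • A j) n < tailSum N (c • A i) n
  rw [tailSum_smul, tailSum_smul]
  exact mul_lt_mul_of_pos_left (hA i j hij n hn1 hnN) hc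

lemma IsSSO.mul {N : ℕ} {A B : Matrix (Fin (N+1)) (Fin (N+1)) ℝ} {c : ℝ}
    (hrow : ∀ i, ∑ k, A i k = c) (hA : IsSSO N A) (hB : IsSSO N B) : IsSSO N (A * B) := by
  intro i j hij n hn1 hnN
  rw [tailSum_mul_apply, tailSum_mul_apply]
  exact sum_mul_lt_sum_mul_of_tailSum_lt (by omega) (by rw [hrow i, hrow j]) (hA i j hij)
    fun k l hkl => hB l k hkl n hn1 hnN

theorem stmt2_general (N : ℕ) (A B : Matrix (Fin (N+1)) (Fin (N+1)) ℝ)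
    (hA : IsStochastic N A)
    (hAo : IsSSO N A) (hBo : IsSSO N B) :
    IsSSO N (A * B) ∧
    ∀ μ : ℝ, 0 < μ → μ < 1 → IsSSO N (μ • A + (1 - μ) • B) :=
  ⟨hAo.mul hA.2 hBo, fun _ hμ hμ1 => (hAo.smul hμ).add (hBo.smul (sub_pos.2 hμ1))⟩

theorem stmt2 (N : ℕ) (A B : Matrix (Fin (N+1)) (Fin (N+1)) ℝ)
    (hA : IsStochastic N A) (hB : IsStochastic N B)
    (hAo : IsSSO N A) (hBo : IsSSO N B) :
    IsSSO N (A * B) ∧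
    ∀ μ : ℝ, 0 < μ → μ < 1 → IsSSO N (μ • A + (1 - μ) • B) :=
  stmt2_general N A B hA hAo hBo
end

section
/- Let M be a Kimura matrix with core matrix M̃ (the (N−1)x(N−1) block over states 1,...,N−1) and one-step fixation vector b (the column of transitions to state N from transient states). Then I−M̃ is invertible, and the unique vector F with F_0=0, F_N=1, M F^T = F^T satisfies F̃^T = (I−M̃)^{-1} b^T and 0 < F_i < 1 for all i=1,...,N−1. -/
/-! Everything rests on one positivity fact for a nonnegative matrix `A` with
`∀ i j, ∃ k, 0 < (Aᵏ) i j`: if `z ≥ 0` and `A z + c ≤ z` for a source `c ≥ 0, c ≠ 0`, then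
`z > 0`, because `z ≥ Aᵏ z ≥ Aᵏ c` and some `Aᵏ` carries the positive entry of `c` to any index.
Applied to `m - x`, where `m > 0` is the largest entry of a subsolution `x ≤ A x`, it yields a
maximum principle as soon as some row of `A` sums to less than one; with `|x|` in place of `x`
this makes `1 - A` injective. On the transient states the fixation vector solves
`y = A y + b`, so `y = (1 - A)⁻¹ b`; the maximum principle for `-y` gives `y ≥ 0`, hence
`y > 0`, and `1 - y` solves the same equation with source `a`, hence `y < 1`. -/

open Finset

/-- Embedding of the transient states `1,...,N-1` into `{0,...,N}`. -/
def emb (N : ℕ) (i : Fin (N-1)) : Fin (N+1) :=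
  ⟨i.1 + 1, by have := i.2; omega⟩

/-- The core of a matrix: the block over the transient states `1,...,N-1`. -/
def core (N : ℕ) (M : Matrix (Fin (N+1)) (Fin (N+1)) ℝ) :
    Matrix (Fin (N-1)) (Fin (N-1)) ℝ :=
  fun i j => M (emb N i) (emb N j)

namespace Matrix

variable {ι 𝕜 : Type*} [Fintype ι] [Field 𝕜] [LinearOrder 𝕜]
  [IsStrictOrderedRing 𝕜] {A : Matrix ι ι 𝕜}

theorem mulVec_mono_of_nonneg (hA : ∀ i j, 0 ≤ A i j) {x y : ι → 𝕜} (hxy : x ≤ y) :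
    A *ᵥ x ≤ A *ᵥ y :=
  fun i => sum_le_sum fun j _ => mul_le_mul_of_nonneg_left (hxy j) (hA i j)

theorem abs_mulVec_le_of_nonneg (hA : ∀ i j, 0 ≤ A i j) (x : ι → 𝕜) :
    |A *ᵥ x| ≤ A *ᵥ |x| := fun i => by
  simpa only [Pi.abs_apply, mulVec, dotProduct, abs_mul, abs_of_nonneg (hA i _)]
    using abs_sum_le_sum_abs (fun j => A i j * x j) univ

theorem one_sub_mulVec_one_pos {a b : ι → 𝕜} (ha : 0 < a) (hb : 0 ≤ b)
    (hrow : A *ᵥ 1 + a + b = 1) : 0 < 1 - A *ᵥ 1 := by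
  rw [sub_eq_iff_eq_add'.2 (by rw [← add_assoc, hrow])]
  exact add_pos_of_pos_of_nonneg ha hb

variable [DecidableEq ι]

theorem pow_mulVec_le_of_mulVec_le (hA : ∀ i j, 0 ≤ A i j) {z : ι → 𝕜} (hz : A *ᵥ z ≤ z)
    (k : ℕ) : (A ^ k) *ᵥ z ≤ z := by
  induction k with
  | zero => rw [pow_zero, one_mulVec]
  | succ k ih =>
    calc (A ^ (k + 1)) *ᵥ z = (A ^ k) *ᵥ (A *ᵥ z) := by rw [pow_succ, mulVec_mulVec]
      _ ≤ (A ^ k) *ᵥ z := mulVec_mono_of_nonneg (pow_apply_nonneg hA k) hz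
      _ ≤ z := ih

section Irreducible

variable (hA : ∀ i j, 0 ≤ A i j) (hirr : ∀ i j, ∃ k : ℕ, 0 < (A ^ k) i j)
include hA hirr

theorem pos_of_mulVec_add_le {z c : ι → 𝕜} (hz : 0 ≤ z) (hc : 0 < c) (h : A *ᵥ z + c ≤ z)
    (i : ι) : 0 < z i := by
  obtain ⟨hc0, i₀, hci₀⟩ := Pi.lt_def.1 hc
  obtain ⟨k, hk⟩ := hirr i i₀
  have hAz : A *ᵥ z ≤ z := (le_add_of_nonneg_right hc0).trans h
  have hcz : c ≤ z := by
    refine (le_add_of_nonneg_left ?_).trans h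
    simpa using mulVec_mono_of_nonneg hA hz
  calc 0 < (A ^ k) i i₀ * c i₀ := mul_pos hk hci₀
    _ ≤ ((A ^ k) *ᵥ c) i :=
      single_le_sum (f := fun j => (A ^ k) i j * c j)
        (fun j _ => mul_nonneg (pow_apply_nonneg hA k i j) (hc0 j)) (mem_univ i₀)
    _ ≤ ((A ^ k) *ᵥ z) i := mulVec_mono_of_nonneg (pow_apply_nonneg hA k) hcz i
    _ ≤ z i := pow_mulVec_le_of_mulVec_le hA hAz k i

theorem nonpos_of_le_mulVec (hdef : 0 < 1 - A *ᵥ 1) {x : ι → 𝕜}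
    (hx : x ≤ A *ᵥ x) : x ≤ 0 := by
  by_contra hpos
  obtain ⟨i, hi⟩ : ∃ i, 0 < x i := by simpa [Pi.le_def] using hpos
  have : Nonempty ι := ⟨i⟩
  obtain ⟨imax, himax⟩ := Finite.exists_max x
  set m := x imax
  have hm : 0 < m := hi.trans_le (himax i)
  -- a nonnegative supersolution vanishing at `imax`
  have hsuper : A *ᵥ (m • 1 - x) + m • (1 - A *ᵥ 1) ≤ m • 1 - x := by
    rw [mulVec_sub, mulVec_smul, smul_sub]
    intro j
    simp only [Pi.add_apply, Pi.sub_apply]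
    linarith [hx j]
  have := pos_of_mulVec_add_le hA hirr (fun j => by simpa using himax j) (smul_pos hm hdef)
    hsuper imax
  simp [m] at this

theorem isUnit_one_sub_of_irreducible (hdef : 0 < 1 - A *ᵥ 1) : IsUnit (1 - A) := by
  refine mulVec_injective_iff_isUnit.1 fun x y hxy => ?_
  have hfix : A *ᵥ (x - y) = x - y := by
    simp only [sub_mulVec, one_mulVec] at hxy
    rw [mulVec_sub]
    linear_combination -hxy
  have habs : |x - y| ≤ 0 := by
    refine nonpos_of_le_mulVec hA hirr hdef ?_
    simpa only [hfix] using abs_mulVec_le_of_nonneg hA (x - y)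
  ext j
  simpa [sub_eq_zero] using habs j

theorem pos_of_eq_mulVec_add (hdef : 0 < 1 - A *ᵥ 1)
    {y b : ι → 𝕜} (hb : 0 < b) (hy : y = A *ᵥ y + b) (i : ι) : 0 < y i := by
  have hy0 : 0 ≤ y := by
    refine neg_nonpos.1 (nonpos_of_le_mulVec hA hirr hdef ?_)
    calc -y ≤ -y + b := le_add_of_nonneg_right hb.le
      _ = A *ᵥ -y := by rw [mulVec_neg]; linear_combination -hy
  exact pos_of_mulVec_add_le hA hirr hy0 hb hy.symm.le i

theorem lt_one_of_eq_mulVec_add {y a b : ι → 𝕜} (ha : 0 < a) (hb : 0 ≤ b)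
    (hrow : A *ᵥ 1 + a + b = 1) (hy : y = A *ᵥ y + b) (i : ι) : y i < 1 := by
  have hcompl : 1 - y = A *ᵥ (1 - y) + a := by
    rw [mulVec_sub]
    linear_combination -hy - hrow
  simpa using pos_of_eq_mulVec_add hA hirr (one_sub_mulVec_one_pos ha hb hrow) ha hcompl i

end Irreducible

theorem eq_mulVec_add_iff (h : IsUnit (1 - A)) {y b : ι → 𝕜} :
    y = A *ᵥ y + b ↔ y = (1 - A)⁻¹ *ᵥ b := by
  have := h.invertible
  have hsolve : y = A *ᵥ y + b ↔ (1 - A) *ᵥ y = b := by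
    rw [sub_mulVec, one_mulVec]
    constructor <;> intro h' <;> linear_combination h'
  rw [hsolve]
  constructor
  · exact fun h' => (inv_mulVec_eq_vec h'.symm).symm
  · rintro rfl
    rw [mulVec_mulVec, mul_inv_of_invertible, one_mulVec]

end Matrix

open Matrix

section Boundary

variable {N : ℕ}

theorem emb_injective : Function.Injective (emb N) := fun i j h => by
  simpa [emb, Fin.ext_iff] using h

theorem emb_ne_zero (i : Fin (N-1)) : emb N i ≠ 0 := by
  simp [emb, Fin.ext_iff]

theorem emb_ne_last (i : Fin (N-1)) : emb N i ≠ Fin.last N :=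
  Fin.ne_of_val_ne (by have := i.2; simp only [emb, Fin.val_last]; omega)

theorem eq_zero_or_eq_last_or_exists_emb (j : Fin (N+1)) :
    j = 0 ∨ j = Fin.last N ∨ ∃ i, emb N i = j := by
  rcases j with ⟨_ | k, hk⟩
  · exact Or.inl rfl
  · by_cases hkN : k + 1 = N
    · exact Or.inr (Or.inl (Fin.ext hkN))
    · exact Or.inr (Or.inr ⟨⟨k, by omega⟩, rfl⟩)

theorem sum_eq_add_sum_emb {R : Type*} [AddCommMonoid R] (hN : 1 ≤ N) (g : Fin (N+1) → R) :
    ∑ j, g j = g 0 + g (Fin.last N) + ∑ i, g (emb N i) := by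
  obtain ⟨n, rfl⟩ : ∃ n, N = n + 1 := ⟨N - 1, by omega⟩
  rw [Fin.sum_univ_succ, Fin.sum_univ_castSucc]
  simp only [add_assoc, add_comm (g (Fin.last (n + 1)))]
  rfl

theorem funext_boundary {α : Type*} {F G : Fin (N+1) → α} (h0 : F 0 = G 0)
    (hlast : F (Fin.last N) = G (Fin.last N)) (hemb : ∀ i, F (emb N i) = G (emb N i)) : F = G := by
  funext j
  rcases eq_zero_or_eq_last_or_exists_emb j with rfl | rfl | ⟨i, rfl⟩
  exacts [h0, hlast, hemb i]

theorem exists_boundary_extension {α : Type*} (hN : 1 ≤ N) (u v : α) (y : Fin (N-1) → α) :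
    ∃ F : Fin (N+1) → α, F 0 = u ∧ F (Fin.last N) = v ∧ (fun i => F (emb N i)) = y := by
  refine ⟨Function.extend (emb N) y fun j => if j = 0 then u else v, ?_, ?_, ?_⟩
  · rw [Function.extend_apply' _ _ _ fun ⟨i, h⟩ => emb_ne_zero i h, if_pos rfl]
  · rw [Function.extend_apply' _ _ _ fun ⟨i, h⟩ => emb_ne_last i h,
      if_neg (Fin.ne_of_val_ne (by rw [Fin.val_last, Fin.val_zero]; omega))]
  · funext i
    exact emb_injective.extend_apply _ _ i

variable {M : Matrix (Fin (N+1)) (Fin (N+1)) ℝ}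

theorem mulVec_emb_apply (hN : 1 ≤ N) (F : Fin (N+1) → ℝ) (i : Fin (N-1)) :
    (M *ᵥ F) (emb N i) = M (emb N i) 0 * F 0 + M (emb N i) (Fin.last N) * F (Fin.last N)
      + (core N M *ᵥ fun l => F (emb N l)) i :=
  sum_eq_add_sum_emb hN _

theorem core_mulVec_one_add (hN : 1 ≤ N) (hM1 : ∀ i, ∑ j, M i j = 1) :
    core N M *ᵥ 1 + (fun i => M (emb N i) 0) + (fun i => M (emb N i) (Fin.last N)) = 1 := by
  funext i
  have h : (M *ᵥ 1) (emb N i) = M (emb N i) 0 * 1 + M (emb N i) (Fin.last N) * 1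
      + (core N M *ᵥ 1) i := mulVec_emb_apply hN 1 i
  have hrow : (M *ᵥ 1) (emb N i) = 1 := by simp [mulVec, dotProduct, hM1]
  simp only [Pi.add_apply, Pi.one_apply]
  linarith

theorem mulVec_eq_self_iff_of_absorbing (hN : 1 ≤ N) (habs0 : ∀ j, M 0 j = if j = 0 then 1 else 0)
    (habsN : ∀ j, M (Fin.last N) j = if j = Fin.last N then 1 else 0) {F : Fin (N+1) → ℝ}
    (hF0 : F 0 = 0) (hFN : F (Fin.last N) = 1) :
    M *ᵥ F = F ↔ (fun i => F (emb N i))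
      = core N M *ᵥ (fun i => F (emb N i)) + fun i => M (emb N i) (Fin.last N) := by
  have hemb : ∀ i, (M *ᵥ F) (emb N i)
      = (core N M *ᵥ (fun i => F (emb N i))) i + M (emb N i) (Fin.last N) := fun i => by
    rw [mulVec_emb_apply hN, hF0, hFN]
    ring
  constructor
  · intro h
    funext i
    rw [Pi.add_apply, ← hemb, h]
  · intro h
    refine funext_boundary ?_ ?_ fun i => ?_
    · simp [mulVec, dotProduct, habs0]
    · simp [mulVec, dotProduct, habsN]
    · rw [hemb]
      exact (congrFun h i).symm

end Boundary

theorem stmt4 (N : ℕ) (hN : 2 ≤ N) (M : Matrix (Fin (N+1)) (Fin (N+1)) ℝ)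
    (hM0 : ∀ i j, 0 ≤ M i j) (hM1 : ∀ i, ∑ j, M i j = 1)
    (habs0 : ∀ j, M 0 j = if j = 0 then 1 else 0)
    (habsN : ∀ j, M (Fin.last N) j = if j = Fin.last N then 1 else 0)
    (hirr : ∀ i j : Fin (N-1), ∃ k : ℕ, 0 < ((core N M) ^ k) i j)
    (ha : (fun i : Fin (N-1) => M (emb N i) 0) ≠ 0)
    (hb : (fun i : Fin (N-1) => M (emb N i) (Fin.last N)) ≠ 0) :
    IsUnit (1 - core N M) ∧
    (∃! F : Fin (N+1) → ℝ,
      F 0 = 0 ∧ F (Fin.last N) = 1 ∧ M.mulVec F = F) ∧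
    (∀ F : Fin (N+1) → ℝ, F 0 = 0 → F (Fin.last N) = 1 → M.mulVec F = F →
      (fun i : Fin (N-1) => F (emb N i))
          = (1 - core N M)⁻¹.mulVec (fun i : Fin (N-1) => M (emb N i) (Fin.last N)) ∧
      (∀ i : Fin (N-1), 0 < F (emb N i) ∧ F (emb N i) < 1)) := by
  have hN1 : 1 ≤ N := by omega
  set A := core N M
  set a : Fin (N-1) → ℝ := fun i => M (emb N i) 0
  set b : Fin (N-1) → ℝ := fun i => M (emb N i) (Fin.last N)
  have hA : ∀ i j, 0 ≤ A i j := fun i j => hM0 _ _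
  have ha' : 0 < a := lt_of_le_of_ne (fun i => hM0 _ _) ha.symm
  have hb' : 0 < b := lt_of_le_of_ne (fun i => hM0 _ _) hb.symm
  have hrow : A *ᵥ 1 + a + b = 1 := core_mulVec_one_add hN1 hM1
  have hdef : 0 < 1 - A *ᵥ 1 := one_sub_mulVec_one_pos ha' hb'.le hrow
  have hunit : IsUnit (1 - A) := isUnit_one_sub_of_irreducible hA hirr hdef
  have hharm (F : Fin (N+1) → ℝ) (h0 : F 0 = 0) (h1 : F (Fin.last N) = 1) :
      M *ᵥ F = F ↔ (fun i => F (emb N i)) = A *ᵥ (fun i => F (emb N i)) + b :=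
    mulVec_eq_self_iff_of_absorbing hN1 habs0 habsN h0 h1
  have hsol (F : Fin (N+1) → ℝ) (h0 : F 0 = 0) (h1 : F (Fin.last N) = 1) :
      M *ᵥ F = F ↔ (fun i => F (emb N i)) = (1 - A)⁻¹ *ᵥ b :=
    (hharm F h0 h1).trans (eq_mulVec_add_iff hunit)
  refine ⟨hunit, ?_, fun F h0 h1 hF => ⟨(hsol F h0 h1).1 hF, fun i => ⟨?_, ?_⟩⟩⟩
  · obtain ⟨F, h0, h1, hF⟩ := exists_boundary_extension hN1 0 1 ((1 - A)⁻¹ *ᵥ b)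
    refine ⟨F, ⟨h0, h1, (hsol F h0 h1).2 hF⟩, fun G ⟨hG0, hG1, hG⟩ => ?_⟩
    refine funext_boundary (hG0.trans h0.symm) (hG1.trans h1.symm) fun i => ?_
    exact congrFun (((hsol G hG0 hG1).1 hG).trans hF.symm) i
  · exact pos_of_eq_mulVec_add hA hirr hdef hb' ((hharm F h0 h1).1 hF) i
  · exact lt_one_of_eq_mulVec_add hA hirr ha' hb'.le hrow ((hharm F h0 h1).1 hF) i
end

section
/- A birth-death Kimura process is banded stochastically ordered if and only if M_{i,i+1} + M_{i+1,i} < 1 for all i = 1,...,N−2. -/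
open Finset

/-- A matrix is stochastically ordered: for `i > j`, row `i` stochastically dominates row `j`. -/
def IsStO (N : ℕ) (A : Matrix (Fin (N+1)) (Fin (N+1)) ℝ) : Prop :=
  ∀ i j : Fin (N+1), j < i → ∀ n : ℕ, 1 ≤ n → n ≤ N →
    tailSum N (A j) n ≤ tailSum N (A i) n

/-- A matrix is banded stochastically ordered with band size one: it is stochastically
ordered and the tail-sum inequalities between consecutive rows `i`, `i+1` are strict for
`n ∈ {i, i+1, i+2} ∩ {1,...,N}`. -/
def IsBStO (N : ℕ) (A : Matrix (Fin (N+1)) (Fin (N+1)) ℝ) : Prop :=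
  IsStO N A ∧
  ∀ i : ℕ, (h : i < N) → ∀ n : ℕ, i ≤ n → n ≤ i + 2 → 1 ≤ n → n ≤ N →
    tailSum N (A ⟨i, by omega⟩) n < tailSum N (A ⟨i + 1, by omega⟩) n

lemma tailSum_zero_of (N : ℕ) (u : Fin (N+1) → ℝ) (n : ℕ)
    (h : ∀ j : Fin (N+1), n ≤ (j : ℕ) → u j = 0) : tailSum N u n = 0 :=
  Finset.sum_eq_zero fun j _ => by
    by_cases hj : n ≤ (j : ℕ)
    · rw [if_pos hj, h j hj]
    · rw [if_neg hj]

lemma tailSum_step (N : ℕ) (u : Fin (N+1) → ℝ) (n : ℕ) (h : n ≤ N) :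
    tailSum N u n = u ⟨n, by omega⟩ + tailSum N u (n+1) := by
  unfold tailSum
  have key : ∀ i : Fin (N+1), (if n ≤ (i : ℕ) then u i else 0) =
      (if i = ⟨n, by omega⟩ then u i else 0) + (if n+1 ≤ (i : ℕ) then u i else 0) := by
    intro i
    by_cases h1 : i = ⟨n, by omega⟩
    · subst h1
      rw [if_pos (le_refl n), if_pos rfl, if_neg (show ¬ (n+1 ≤ n) by omega)]
      ring
    · rw [if_neg h1, zero_add]
      have hne : (i : ℕ) ≠ n := fun hv => h1 (Fin.ext hv)
      have : (n ≤ (i : ℕ)) ↔ (n+1 ≤ (i : ℕ)) := by omega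
      simp only [this]
  rw [Finset.sum_congr rfl (fun i _ => key i), Finset.sum_add_distrib]
  congr 1
  rw [Finset.sum_ite_eq' Finset.univ (⟨n, by omega⟩ : Fin (N+1)) u]
  simp

lemma blockZero {m : ℕ} (A : Matrix (Fin m) (Fin m) ℝ) (P : Fin m → Prop)
    (h : ∀ a b, P a → ¬ P b → A a b = 0) :
    ∀ k (a b : Fin m), P a → ¬ P b → (A ^ k) a b = 0 := by
  intro k
  induction k with
  | zero =>
    intro a b hpa hpb
    have hab : a ≠ b := fun hab => hpb (hab ▸ hpa)
    rw [pow_zero, Matrix.one_apply_ne hab]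
  | succ k ih =>
    intro a b hpa hpb
    rw [pow_succ, Matrix.mul_apply]
    apply Finset.sum_eq_zero
    intro c _
    by_cases hc : P c
    · rw [h c b hc hpb, mul_zero]
    · rw [ih a c hpa hc, zero_mul]

lemma pairBound {m : ℕ} (v : Fin m → ℝ) (h0 : ∀ j, 0 ≤ v j) (h1 : ∑ j, v j = 1)
    (a b : Fin m) (hab : a ≠ b) : v a + v b ≤ 1 := by
  have h2 := Finset.sum_le_sum_of_subset_of_nonneg
    (Finset.subset_univ ({a, b} : Finset (Fin m))) (fun j _ _ => h0 j)
  rw [Finset.sum_pair hab, h1] at h2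
  exact h2

theorem stmt7 (N : ℕ) (hN : 2 ≤ N) (M : Matrix (Fin (N+1)) (Fin (N+1)) ℝ)
    (hM0 : ∀ i j, 0 ≤ M i j) (hM1 : ∀ i, ∑ j, M i j = 1)
    (habs0 : ∀ j, M 0 j = if j = 0 then 1 else 0)
    (habsN : ∀ j, M (Fin.last N) j = if j = Fin.last N then 1 else 0)
    (htri : ∀ i j : Fin (N+1), ((i : ℕ) + 1 < (j : ℕ) ∨ (j : ℕ) + 1 < (i : ℕ)) → M i j = 0)
    (hirr : ∀ i j : Fin (N-1), ∃ k : ℕ, 0 < ((core N M) ^ k) i j)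
    (ha : (fun i : Fin (N-1) => M (emb N i) 0) ≠ 0)
    (hb : (fun i : Fin (N-1) => M (emb N i) (Fin.last N)) ≠ 0) :
    IsBStO N M ↔
      ∀ i : ℕ, (h1 : 1 ≤ i) → (h2 : i ≤ N - 2) →
        M ⟨i, by omega⟩ ⟨i + 1, by omega⟩ + M ⟨i + 1, by omega⟩ ⟨i, by omega⟩ < 1 := by
  -- tail-sum computations for a tridiagonal stochastic row
  have hT0 : ∀ (r : Fin (N+1)) (n : ℕ), (r : ℕ) + 2 ≤ n → tailSum N (M r) n = 0 := by
    intro r n hn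
    apply tailSum_zero_of
    intro j hj
    exact htri r j (Or.inl (by omega))
  have hT1 : ∀ (n : ℕ) (r : Fin (N+1)), n < (r : ℕ) → tailSum N (M r) n = 1 := by
    intro n
    induction n with
    | zero =>
      intro r _
      have : tailSum N (M r) 0 = ∑ j, M r j := by
        apply Finset.sum_congr rfl
        intro j _
        rw [if_pos (Nat.zero_le _)]
      rw [this, hM1 r]
    | succ n ih =>
      intro r hn
      have hrN : (r : ℕ) ≤ N := by omega
      have hstep := tailSum_step N (M r) n (by omega)
      have h0 : M r ⟨n, by omega⟩ = 0 :=
        htri r ⟨n, by omega⟩ (Or.inr (show n + 1 < (r : ℕ) by omega))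
      have h1 := ih r (by omega)
      rw [h1, h0] at hstep
      linarith
  have hTtop : ∀ (r s : Fin (N+1)) (n : ℕ), (r : ℕ) < N → (s : ℕ) = (r : ℕ) + 1 →
      n = (r : ℕ) + 1 → tailSum N (M r) n = M r s := by
    intro r s n hr hs hn
    subst hn
    have hstep := tailSum_step N (M r) ((r : ℕ) + 1) (by omega)
    rw [hT0 r ((r : ℕ) + 2) le_rfl] at hstep
    have e : (⟨(r : ℕ) + 1, by omega⟩ : Fin (N+1)) = s := Fin.ext (by simp only [Fin.val_mk]; omega)
    rw [e] at hstep
    rw [hstep]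
    ring
  have hTat : ∀ (r p : Fin (N+1)) (n : ℕ), 1 ≤ (r : ℕ) → (p : ℕ) = (r : ℕ) - 1 →
      n = (r : ℕ) → tailSum N (M r) n = 1 - M r p := by
    intro r p n h1 hp hn
    subst hn
    have hrN : (r : ℕ) ≤ N := by omega
    have hstep := tailSum_step N (M r) ((r : ℕ) - 1) (by omega)
    have e : (r : ℕ) - 1 + 1 = (r : ℕ) := by omega
    rw [e] at hstep
    have e2 : (⟨(r : ℕ) - 1, by omega⟩ : Fin (N+1)) = p := Fin.ext (by simp only [Fin.val_mk]; omega)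
    rw [e2] at hstep
    rw [hT1 ((r : ℕ) - 1) r (by omega)] at hstep
    linarith
  -- positivity of superdiagonal entries over transient rows
  have hup : ∀ (r s : Fin (N+1)), 1 ≤ (r : ℕ) → (r : ℕ) ≤ N - 1 → (s : ℕ) = (r : ℕ) + 1 →
      0 < M r s := by
    intro r s h1 h2 hs
    rcases Nat.lt_or_ge (r : ℕ) (N - 1) with h | h
    · by_contra hcon
      push_neg at hcon
      have hz : M r s = 0 := le_antisymm hcon (hM0 _ _)
      have hP : ∀ a b : Fin (N-1), (a : ℕ) < (r : ℕ) → ¬ ((b : ℕ) < (r : ℕ)) →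
          core N M a b = 0 := by
        intro a b hA hB
        push_neg at hB
        show M (emb N a) (emb N b) = 0
        rcases Nat.lt_or_ge ((a : ℕ) + 1 + 1) ((b : ℕ) + 1) with hd | hd
        · exact htri _ _ (Or.inl (show (emb N a : ℕ) + 1 < (emb N b : ℕ) by
            simp only [emb, Fin.val_mk]; omega))
        · have e1 : emb N a = r := Fin.ext (by simp only [emb, Fin.val_mk]; omega)
          have e2 : emb N b = s := Fin.ext (by simp only [emb, Fin.val_mk]; omega)
          rw [e1, e2]
          exact hz
      obtain ⟨k, hk⟩ := hirr ⟨(r : ℕ) - 1, by omega⟩ ⟨(r : ℕ), by omega⟩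
      have hz2 := blockZero (core N M) (fun c => (c : ℕ) < (r : ℕ)) hP k
        ⟨(r : ℕ) - 1, by omega⟩ ⟨(r : ℕ), by omega⟩
        (show (r : ℕ) - 1 < (r : ℕ) by omega) (show ¬ ((r : ℕ) < (r : ℕ)) by omega)
      rw [hz2] at hk
      exact lt_irrefl 0 hk
    · have hr : (r : ℕ) = N - 1 := by omega
      have hex : ∃ i : Fin (N-1), M (emb N i) (Fin.last N) ≠ 0 := by
        by_contra hcon
        push_neg at hcon
        exact hb (funext hcon)
      obtain ⟨i, hi⟩ := hex
      have hiN : (i : ℕ) < N - 1 := i.2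
      have hi0 : (i : ℕ) = N - 2 := by
        by_contra h0
        exact hi (htri _ _ (Or.inl (show (emb N i : ℕ) + 1 < (Fin.last N : ℕ) by
          simp only [emb, Fin.val_mk, Fin.val_last]; omega)))
      have e1 : emb N i = r := Fin.ext (by simp only [emb, Fin.val_mk]; omega)
      have e2 : Fin.last N = s := Fin.ext (by simp only [Fin.val_last]; omega)
      rw [e1, e2] at hi
      exact lt_of_le_of_ne (hM0 _ _) (Ne.symm hi)
  -- positivity of subdiagonal entries over transient rows
  have hdown : ∀ (r p : Fin (N+1)), 1 ≤ (r : ℕ) → (r : ℕ) ≤ N - 1 → (p : ℕ) = (r : ℕ) - 1 →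
      0 < M r p := by
    intro r p h1 h2 hp
    rcases Nat.lt_or_ge 1 (r : ℕ) with h | h
    · -- 2 ≤ r : use irreducibility
      by_contra hcon
      push_neg at hcon
      have hz : M r p = 0 := le_antisymm hcon (hM0 _ _)
      have hP : ∀ a b : Fin (N-1), ((r : ℕ) - 1 ≤ (a : ℕ)) → ¬ ((r : ℕ) - 1 ≤ (b : ℕ)) →
          core N M a b = 0 := by
        intro a b hA hB
        push_neg at hB
        show M (emb N a) (emb N b) = 0
        rcases Nat.lt_or_ge ((b : ℕ) + 1 + 1) ((a : ℕ) + 1) with hd | hd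
        · exact htri _ _ (Or.inr (show (emb N b : ℕ) + 1 < (emb N a : ℕ) by
            simp only [emb, Fin.val_mk]; omega))
        · have e1 : emb N a = r := Fin.ext (by simp only [emb, Fin.val_mk]; omega)
          have e2 : emb N b = p := Fin.ext (by simp only [emb, Fin.val_mk]; omega)
          rw [e1, e2]
          exact hz
      obtain ⟨k, hk⟩ := hirr ⟨(r : ℕ) - 1, by omega⟩ ⟨(r : ℕ) - 2, by omega⟩
      have hz2 := blockZero (core N M) (fun c => (r : ℕ) - 1 ≤ (c : ℕ)) hP k
        ⟨(r : ℕ) - 1, by omega⟩ ⟨(r : ℕ) - 2, by omega⟩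
        (show (r : ℕ) - 1 ≤ (r : ℕ) - 1 by omega)
        (show ¬ ((r : ℕ) - 1 ≤ (r : ℕ) - 2) by omega)
      rw [hz2] at hk
      exact lt_irrefl 0 hk
    · have hr : (r : ℕ) = 1 := by omega
      have hex : ∃ i : Fin (N-1), M (emb N i) 0 ≠ 0 := by
        by_contra hcon
        push_neg at hcon
        exact ha (funext hcon)
      obtain ⟨i, hi⟩ := hex
      have hi0 : (i : ℕ) = 0 := by
        by_contra h0
        exact hi (htri _ _ (Or.inr (show ((0 : Fin (N+1)) : ℕ) + 1 < (emb N i : ℕ) by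
          simp only [emb, Fin.val_mk, Fin.val_zero]; omega)))
      have e1 : emb N i = r := Fin.ext (by simp only [emb, Fin.val_mk]; omega)
      have e2 : (0 : Fin (N+1)) = p := Fin.ext (by simp only [Fin.val_zero]; omega)
      rw [e1, e2] at hi
      exact lt_of_le_of_ne (hM0 _ _) (Ne.symm hi)
  constructor
  · -- forward direction
    intro hB i h1 h2
    have hs := hB.2 i (show i < N by omega) (i+1) (show i ≤ i+1 by omega)
      (show i+1 ≤ i+2 by omega) (show 1 ≤ i+1 by omega) (show i+1 ≤ N by omega)
    have e1 := hTtop ⟨i, by omega⟩ ⟨i+1, by omega⟩ (i+1) (show i < N by omega) rfl rfl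
    have e2 := hTat ⟨i+1, by omega⟩ ⟨i, by omega⟩ (i+1) (show 1 ≤ i+1 by omega)
      (show i = i+1-1 by omega) rfl
    rw [e1, e2] at hs
    linarith
  · -- backward direction
    intro hC
    -- full version of the condition including boundary rows
    have hCfull : ∀ (i : ℕ) (h : i < N),
        M ⟨i, by omega⟩ ⟨i+1, by omega⟩ + M ⟨i+1, by omega⟩ ⟨i, by omega⟩ < 1 := by
      intro i hi
      rcases Nat.eq_zero_or_pos i with hz | hpos
      · subst hz
        have h0 : M ⟨0, by omega⟩ ⟨1, by omega⟩ = 0 := by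
          have e0 : (⟨0, by omega⟩ : Fin (N+1)) = 0 := Fin.ext (by simp)
          rw [e0, habs0]
          rw [if_neg (show (⟨1, by omega⟩ : Fin (N+1)) ≠ 0 by
            intro hh
            have := congrArg Fin.val hh
            simp at this)]
        have hpair := pairBound (M ⟨1, by omega⟩) (hM0 _) (hM1 _)
          ⟨0, by omega⟩ ⟨2, by omega⟩ (by
            intro hh
            have := congrArg Fin.val hh
            simp at this)
        have hpos2 : 0 < M ⟨1, by omega⟩ ⟨2, by omega⟩ :=
          hup ⟨1, by omega⟩ ⟨2, by omega⟩ (show 1 ≤ 1 by omega) (show 1 ≤ N - 1 by omega) (show (2:ℕ) = 1 + 1 by omega)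
        rw [h0]
        linarith
      · rcases Nat.lt_or_ge i (N - 1) with hlt | hge
        · exact hC i hpos (by omega)
        · have hieq : i = N - 1 := by omega
          subst hieq
          have h0 : M ⟨N-1+1, by omega⟩ ⟨N-1, by omega⟩ = 0 := by
            have e0 : (⟨N-1+1, by omega⟩ : Fin (N+1)) = Fin.last N :=
              Fin.ext (by simp only [Fin.val_last]; omega)
            rw [e0, habsN]
            rw [if_neg (show (⟨N-1, by omega⟩ : Fin (N+1)) ≠ Fin.last N by
              intro hh
              have := congrArg Fin.val hh
              simp only [Fin.val_last] at this
              omega)]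
          have hpair := pairBound (M ⟨N-1, by omega⟩) (hM0 _) (hM1 _)
            ⟨N-1+1, by omega⟩ ⟨N-2, by omega⟩ (by
              intro hh
              have := congrArg Fin.val hh
              simp only at this
              omega)
          have hpos2 : 0 < M ⟨N-1, by omega⟩ ⟨N-2, by omega⟩ :=
            hdown ⟨N-1, by omega⟩ ⟨N-2, by omega⟩ (show 1 ≤ N-1 by omega) (show N-1 ≤ N-1 by omega) (show N-2 = N-1-1 by omega)
          rw [h0]
          linarith
    -- the strict inequalities between consecutive rows
    have hstrict : ∀ (i : ℕ) (h : i < N) (n : ℕ), i ≤ n → n ≤ i + 2 → 1 ≤ n → n ≤ N →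
        tailSum N (M ⟨i, by omega⟩) n < tailSum N (M ⟨i+1, by omega⟩) n := by
      intro i hi n hn1 hn2 hn3 hn4
      have hcase : n = i ∨ n = i + 1 ∨ n = i + 2 := by omega
      rcases hcase with hc | hc | hc
      · have hi1 : 1 ≤ i := by omega
        have e1 := hTat ⟨i, by omega⟩ ⟨i-1, by omega⟩ n (show 1 ≤ i from hi1)
          (show i-1 = i-1 from rfl) (show n = i from hc)
        have e2 := hT1 n ⟨i+1, by omega⟩ (show n < i+1 by omega)
        have hp := hdown ⟨i, by omega⟩ ⟨i-1, by omega⟩ (show 1 ≤ i from hi1)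
          (show i ≤ N-1 by omega) (show i-1 = i-1 from rfl)
        rw [e1, e2]
        linarith
      · have e1 := hTtop ⟨i, by omega⟩ ⟨i+1, by omega⟩ n (show i < N from hi) rfl
          (show n = i+1 from hc)
        have e2 := hTat ⟨i+1, by omega⟩ ⟨i, by omega⟩ n (show 1 ≤ i+1 by omega)
          (show i = i+1-1 by omega) (show n = i+1 from hc)
        have hc2 := hCfull i hi
        rw [e1, e2]
        linarith
      · have e1 := hT0 ⟨i, by omega⟩ n (show i+2 ≤ n by omega)
        have e2 := hTtop ⟨i+1, by omega⟩ ⟨i+2, by omega⟩ n (show i+1 < N by omega)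
          rfl (show n = i+1+1 by omega)
        have hp := hup ⟨i+1, by omega⟩ ⟨i+2, by omega⟩ (show 1 ≤ i+1 by omega)
          (show i+1 ≤ N-1 by omega) (show i+2 = i+1+1 from rfl)
        rw [e1, e2]
        linarith
    -- weak inequalities between consecutive rows, for all n
    have hle : ∀ (i : ℕ) (h : i < N) (n : ℕ), 1 ≤ n → n ≤ N →
        tailSum N (M ⟨i, by omega⟩) n ≤ tailSum N (M ⟨i+1, by omega⟩) n := by
      intro i hi n hn1 hn2
      rcases Nat.lt_or_ge n i with hlow | hmid
      · rw [hT1 n ⟨i, by omega⟩ (show n < i by omega), hT1 n ⟨i+1, by omega⟩ (show n < i+1 by omega)]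
      · rcases Nat.lt_or_ge (i+2) n with hhigh | hwin
        · rw [hT0 ⟨i, by omega⟩ n (show i+2 ≤ n by omega), hT0 ⟨i+1, by omega⟩ n (show i+1+2 ≤ n by omega)]
        · exact le_of_lt (hstrict i hi n (by omega) (by omega) hn1 hn2)
    -- stochastic order by transitivity
    have key : ∀ (m : ℕ) (hm : m < N + 1) (j : Fin (N+1)), (j : ℕ) ≤ m →
        ∀ n : ℕ, 1 ≤ n → n ≤ N → tailSum N (M j) n ≤ tailSum N (M ⟨m, hm⟩) n := by
      intro m
      induction m with
      | zero =>
        intro hm j hj n _ _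
        have : j = ⟨0, hm⟩ := Fin.ext (by simp only [Fin.val_mk]; omega)
        rw [this]
      | succ m ih =>
        intro hm j hj n hn1 hn2
        rcases Nat.lt_or_ge (j : ℕ) (m+1) with hlt | hge
        · exact le_trans (ih (by omega) j (by omega) n hn1 hn2)
            (hle m (by omega) n hn1 hn2)
        · have : j = ⟨m+1, hm⟩ := Fin.ext (by simp only [Fin.val_mk]; omega)
          rw [this]
    refine ⟨?_, hstrict⟩
    intro i j hji n hn1 hn2
    have hji' : (j : ℕ) ≤ (i : ℕ) := le_of_lt hji
    exact key (i : ℕ) i.isLt j hji' n hn1 hn2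
end

section
/- For the Moran process with type selection probabilities p, if p_i satisfies 1/(N+1) < p_i < 1 − 1/(N+1) for all i=1,...,N−1, then the Moran transition matrix is banded stochastically ordered. -/
/-!
Row `i` of the Moran matrix has tail sums `1` below `i`, `1 - M_{i,i-1}` at `i`, `M_{i,i+1}` at
`i + 1` and `0` beyond. Consecutive rows are therefore ordered as soon as the off-diagonal entries
are nonnegative and `M_{i,i+1} + M_{i+1,i} ≤ 1`, and strictly on the band when moreover this
inequality is strict and the off-diagonal entries of the interior rows are positive. The bounds on `p` give the strict band inequality, since
`(N - i) p_i + (i + 1) (1 - p_{i+1}) < (N + 1) (1 - 1 / (N + 1)) = N`.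
-/

open Finset

/-- The Moran transition matrix associated to a type selection probability vector `p`. -/
noncomputable def moran (N : ℕ) (p : Fin (N+1) → ℝ) :
    Matrix (Fin (N+1)) (Fin (N+1)) ℝ :=
  fun i j =>
    if (j : ℕ) + 1 = (i : ℕ) then ((i : ℕ) : ℝ) / N * (1 - p i)
    else if (i : ℕ) + 1 = (j : ℕ) then ((N : ℝ) - ((i : ℕ) : ℝ)) / N * p i
    else if i = j then
      1 - ((i : ℕ) : ℝ) / N * (1 - p i) - ((N : ℝ) - ((i : ℕ) : ℝ)) / N * p i
    else 0

section TailSum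

variable {N : ℕ} {u : Fin (N+1) → ℝ}

theorem tailSum_eq_zero_of_lt {n : ℕ} (hn : N < n) : tailSum N u n = 0 :=
  Finset.sum_eq_zero fun j _ => if_neg (by omega)

theorem tailSum_eq_add_tailSum_succ {n : ℕ} (hn : n ≤ N) :
    tailSum N u n = u ⟨n, by omega⟩ + tailSum N u (n+1) := by
  have split : ∀ j : Fin (N+1), (if n ≤ (j : ℕ) then u j else 0) =
      (if j = ⟨n, by omega⟩ then u j else 0) + (if n + 1 ≤ (j : ℕ) then u j else 0) := by
    intro j
    split_ifs <;> simp_all [Fin.ext_iff] <;> omega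
  rw [tailSum, Finset.sum_congr rfl fun j _ => split j, Finset.sum_add_distrib,
    Finset.sum_ite_eq' Finset.univ _ u, if_pos (Finset.mem_univ _), tailSum]

theorem tailSum_eq_tailSum_of_eq_zero {n m : ℕ} (hnm : n ≤ m)
    (hu : ∀ j : Fin (N+1), n ≤ (j : ℕ) → (j : ℕ) < m → u j = 0) :
    tailSum N u n = tailSum N u m := by
  refine Finset.sum_congr rfl fun j _ => ?_
  split_ifs with h₁ h₂ h₂
  · rfl
  · exact hu j h₁ (by omega)
  · omega
  · rfl

end TailSum

-- The entries `M_{i,i-1}` and `M_{i,i+1}`.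
noncomputable def moranDown (N : ℕ) (p : Fin (N+1) → ℝ) (i : Fin (N+1)) : ℝ :=
  ((i : ℕ) : ℝ) / N * (1 - p i)

noncomputable def moranUp (N : ℕ) (p : Fin (N+1) → ℝ) (i : Fin (N+1)) : ℝ :=
  ((N : ℝ) - ((i : ℕ) : ℝ)) / N * p i

section Moran

variable {N : ℕ} {p : Fin (N+1) → ℝ}

theorem moran_apply_of_succ_eq {i j : Fin (N+1)} (h : (j : ℕ) + 1 = i) :
    moran N p i j = moranDown N p i := if_pos h

theorem moran_apply_of_eq_succ {i j : Fin (N+1)} (h : (i : ℕ) + 1 = j) :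
    moran N p i j = moranUp N p i := by
  rw [moran, if_neg (by omega), if_pos h, moranUp]

theorem moran_apply_self (i : Fin (N+1)) :
    moran N p i i = 1 - moranDown N p i - moranUp N p i := by
  rw [moran, if_neg (by omega), if_neg (by omega), if_pos rfl, moranDown, moranUp]

theorem moran_apply_eq_zero {i j : Fin (N+1)} (h : (i : ℕ) + 1 < j ∨ (j : ℕ) + 1 < i) :
    moran N p i j = 0 := by
  rw [moran, if_neg (by omega), if_neg (by omega), if_neg (by rw [Fin.ext_iff]; omega)]

theorem moranDown_nonneg {i : Fin (N+1)} (h : p i ≤ 1) : 0 ≤ moranDown N p i :=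
  mul_nonneg (by positivity) (by linarith)

theorem moranUp_nonneg {i : Fin (N+1)} (h : 0 ≤ p i) : 0 ≤ moranUp N p i :=
  mul_nonneg (div_nonneg (by linarith [(Nat.cast_le (α := ℝ)).2 (Fin.is_le i)]) (by positivity)) h

theorem moranDown_pos {i : Fin (N+1)} (hi : 0 < (i : ℕ)) (h : p i < 1) : 0 < moranDown N p i :=
  mul_pos (div_pos (by exact_mod_cast hi) (by exact_mod_cast hi.trans_le (Fin.is_le i)))
    (by linarith)

theorem moranUp_pos {i : Fin (N+1)} (hi : (i : ℕ) < N) (h : 0 < p i) : 0 < moranUp N p i :=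
  mul_pos (div_pos (by linarith [(Nat.cast_lt (α := ℝ)).2 hi])
    (by exact_mod_cast (Nat.zero_le _).trans_lt hi)) h

theorem tailSum_moran_succ (i : Fin (N+1)) :
    tailSum N (moran N p i) (i + 1) = moranUp N p i := by
  rcases (Fin.is_le i).lt_or_eq with hi | hi
  · rw [tailSum_eq_add_tailSum_succ hi, moran_apply_of_eq_succ rfl,
      tailSum_eq_tailSum_of_eq_zero (m := N + 1) (by omega)
        fun j hj _ => moran_apply_eq_zero (by omega),
      tailSum_eq_zero_of_lt (by omega), add_zero]
  · rw [tailSum_eq_zero_of_lt (by omega), moranUp, hi, sub_self, zero_div, zero_mul]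

theorem tailSum_moran_self (i : Fin (N+1)) :
    tailSum N (moran N p i) i = 1 - moranDown N p i := by
  rw [tailSum_eq_add_tailSum_succ (Fin.is_le i), tailSum_moran_succ, Fin.eta, moran_apply_self]
  ring

theorem tailSum_moran_of_lt {i : Fin (N+1)} {n : ℕ} (hn : n < i) :
    tailSum N (moran N p i) n = 1 := by
  rw [tailSum_eq_tailSum_of_eq_zero (m := i - 1) (by omega)
      fun j _ hj => moran_apply_eq_zero (by omega),
    tailSum_eq_add_tailSum_succ (by omega), moran_apply_of_succ_eq (by simp; omega),
    Nat.sub_add_cancel (by omega), tailSum_moran_self]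
  ring

theorem tailSum_moran_of_add_two_le {i : Fin (N+1)} {n : ℕ} (hn : (i : ℕ) + 2 ≤ n) :
    tailSum N (moran N p i) n = 0 :=
  Finset.sum_eq_zero fun j _ => by
    split_ifs with h
    · exact moran_apply_eq_zero (by omega)
    · rfl

theorem tailSum_moran_castSucc_le_succ {i : Fin N} (hd : 0 ≤ moranDown N p i.castSucc)
    (hu : 0 ≤ moranUp N p i.succ)
    (hband : moranUp N p i.castSucc + moranDown N p i.succ ≤ 1) (n : ℕ) :
    tailSum N (moran N p i.castSucc) n ≤ tailSum N (moran N p i.succ) n := by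
  have hi : ((i.castSucc : Fin (N+1)) : ℕ) = i := rfl
  have hi' : ((i.succ : Fin (N+1)) : ℕ) = i + 1 := rfl
  rcases lt_trichotomy n i with hn | rfl | hn
  · rw [tailSum_moran_of_lt (by omega), tailSum_moran_of_lt (by omega)]
  · rw [← hi, tailSum_moran_self, tailSum_moran_of_lt (by omega)]
    linarith
  rcases (by omega : n = i + 1 ∨ n = i + 2 ∨ i + 3 ≤ n) with rfl | rfl | hn
  · rw [← hi, tailSum_moran_succ, hi, ← hi', tailSum_moran_self]
    linarith
  · rw [tailSum_moran_of_add_two_le (by omega), show (i : ℕ) + 2 = i.succ + 1 from rfl,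
      tailSum_moran_succ]
    exact hu
  · rw [tailSum_moran_of_add_two_le (by omega), tailSum_moran_of_add_two_le (by omega)]

theorem isBStO_moran_of (hd : ∀ i, 0 ≤ moranDown N p i) (hu : ∀ i, 0 ≤ moranUp N p i)
    (hd_pos : ∀ i : Fin (N+1), 0 < (i : ℕ) → (i : ℕ) < N → 0 < moranDown N p i)
    (hu_pos : ∀ i : Fin (N+1), 0 < (i : ℕ) → (i : ℕ) < N → 0 < moranUp N p i)
    (hband : ∀ i : Fin N, moranUp N p i.castSucc + moranDown N p i.succ < 1) :
    IsBStO N (moran N p) := by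
  refine ⟨fun i j hji n _ _ => ?_, fun m hm n hmn hnm h1 hN => ?_⟩
  · exact Fin.monotone_iff_le_succ (f := fun i => tailSum N (moran N p i) n) |>.2
      (fun k => tailSum_moran_castSucc_le_succ (hd _) (hu _) (hband k).le n) hji.le
  rcases (by omega : n = m ∨ n = m + 1 ∨ n = m + 2) with rfl | rfl | rfl
  · have hL := tailSum_moran_self (p := p) ⟨n, by omega⟩
    have hR := tailSum_moran_of_lt (p := p) (i := ⟨n + 1, by omega⟩) (n := n) (by simp)
    linarith [hd_pos ⟨n, by omega⟩ h1 hm]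
  · have hL := tailSum_moran_succ (p := p) ⟨m, by omega⟩
    have hR := tailSum_moran_self (p := p) ⟨m + 1, by omega⟩
    have hB : moranUp N p ⟨m, by omega⟩ + moranDown N p ⟨m + 1, by omega⟩ < 1 := hband ⟨m, hm⟩
    linarith
  · have hL := tailSum_moran_of_add_two_le (p := p) (i := ⟨m, by omega⟩) (n := m + 2) le_rfl
    have hR := tailSum_moran_succ (p := p) ⟨m + 1, by omega⟩
    linarith [hu_pos ⟨m + 1, by omega⟩ (by simp) (by simp; omega)]

theorem moranUp_add_moranDown_succ_lt {i : Fin N}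
    (hhi : p i.castSucc < 1 - 1 / ((N : ℝ) + 1)) (hlo : 1 / ((N : ℝ) + 1) < p i.succ) :
    moranUp N p i.castSucc + moranDown N p i.succ < 1 := by
  set c := 1 / ((N : ℝ) + 1)
  have hN : (0 : ℝ) < N := by exact_mod_cast (Nat.zero_le _).trans_lt i.is_lt
  have hiN : ((i : ℕ) : ℝ) < N := by exact_mod_cast i.is_lt
  have hc : ((N : ℝ) + 1) * c = 1 := mul_one_div_cancel (by positivity)
  rw [moranUp, moranDown, div_mul_eq_mul_div, div_mul_eq_mul_div, ← add_div, div_lt_one hN]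
  simp only [Fin.val_castSucc, Fin.val_succ, Nat.cast_add, Nat.cast_one]
  nlinarith [mul_lt_mul_of_pos_left hhi (sub_pos.2 hiN),
    mul_lt_mul_of_pos_left (sub_lt_sub_left hlo 1) (by positivity : (0 : ℝ) < i + 1)]

end Moran

theorem stmt8_general (N : ℕ) (p : Fin (N+1) → ℝ)
    (hp0 : p 0 = 0) (hpN : p (Fin.last N) = 1)
    (hp : ∀ i : Fin (N+1), 0 < (i : ℕ) → (i : ℕ) < N →
      1 / ((N : ℝ) + 1) < p i ∧ p i < 1 - 1 / ((N : ℝ) + 1)) :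
    IsBStO N (moran N p) := by
  have hc : 0 < 1 / ((N : ℝ) + 1) := by positivity
  have hc_lt (hN : 0 < N) : 1 / ((N : ℝ) + 1) < 1 := by
    rw [div_lt_one (by positivity)]
    exact_mod_cast Nat.succ_lt_succ hN
  have hlo : ∀ i : Fin (N+1), 0 < (i : ℕ) → 1 / ((N : ℝ) + 1) < p i := fun i hi => by
    rcases (Fin.is_le i).lt_or_eq with hiN | hiN
    · exact (hp i hi hiN).1
    · rw [show i = Fin.last N from Fin.ext hiN, hpN]
      exact hc_lt (hiN ▸ hi)
  have hhi : ∀ i : Fin (N+1), (i : ℕ) < N → p i < 1 - 1 / ((N : ℝ) + 1) := fun i hiN => by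
    rcases (Nat.zero_le (i : ℕ)).lt_or_eq with hi | hi
    · exact (hp i hi hiN).2
    · rw [show i = 0 from Fin.ext hi.symm, hp0, sub_pos]
      exact hc_lt (hi ▸ hiN)
  have hp_nonneg (i : Fin (N+1)) : 0 ≤ p i := by
    rcases (Nat.zero_le (i : ℕ)).lt_or_eq with hi | hi
    · linarith [hlo i hi]
    · rw [show i = 0 from Fin.ext hi.symm, hp0]
  have hp_le_one (i : Fin (N+1)) : p i ≤ 1 := by
    rcases (Fin.is_le i).lt_or_eq with hiN | hiN
    · linarith [hhi i hiN]
    · rw [show i = Fin.last N from Fin.ext hiN, hpN]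
  exact isBStO_moran_of (fun i => moranDown_nonneg (hp_le_one i))
    (fun i => moranUp_nonneg (hp_nonneg i))
    (fun i hi hiN => moranDown_pos hi (by linarith [hhi i hiN]))
    (fun i hi hiN => moranUp_pos hiN (by linarith [hlo i hi]))
    (fun i => moranUp_add_moranDown_succ_lt (hhi _ i.is_lt) (hlo _ i.succ_pos))

theorem stmt8 (N : ℕ) (hN : 1 ≤ N) (p : Fin (N+1) → ℝ)
    (hp0 : p 0 = 0) (hpN : p (Fin.last N) = 1)
    (hp : ∀ i : Fin (N+1), 0 < (i : ℕ) → (i : ℕ) < N →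
      1 / ((N : ℝ) + 1) < p i ∧ p i < 1 - 1 / ((N : ℝ) + 1)) :
    IsBStO N (moran N p) :=
  stmt8_general N p hp0 hpN hp
end

section
/- Given any increasing admissible fixation vector F (0 = F_0 < F_1 < ... < F_N = 1), the vector p defined by p_i = i(F_i − F_{i−1}) / [ i(F_i − F_{i−1}) + (N−i)(F_{i+1} − F_i) ] for i=1,...,N−1 satisfies 0 < p_i < 1 and is the unique type selection probability vector such that the corresponding Moran process has fixation vector F. -/
open Finset

/-!
The boundary conditions `q 0 = 0` and `q N = 1` turn rows `0` and `N` of the Moran matrix into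
unit vectors, so `F` is fixed there whatever `F` is. At an interior site `i`, with increments
`a = F i - F (i-1)` and `b = F (i+1) - F i`, the fixed-point equation is the balance equation
`q i * (i a + (N - i) b) = i a` between downward and upward fluxes. It is linear in `q i`, and
strict monotonicity of `F` makes `i a` and `(N - i) b` positive, so it determines `q i` uniquely as
`i a / (i a + (N - i) b)`, a number strictly between `0` and `1`.
-/

section

open Matrix

variable {N : ℕ} {q : Fin (N+1) → ℝ} {i j k : Fin (N+1)}

theorem moran_row_zero (hq : q 0 = 0) : moran N q 0 = Pi.single 0 1 := by
  funext l
  simp only [moran, Pi.single_apply, hq, Fin.ext_iff, Fin.val_zero]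
  split_ifs <;> first | omega | contradiction | simp

theorem moran_row_last (hq : q (Fin.last N) = 1) :
    moran N q (Fin.last N) = Pi.single (Fin.last N) 1 := by
  funext l
  simp only [moran, Pi.single_apply, hq, Fin.ext_iff, Fin.val_last]
  split_ifs <;> first | omega | contradiction | simp

theorem mulVec_moran_zero (hq : q 0 = 0) (F : Fin (N+1) → ℝ) :
    (moran N q *ᵥ F) 0 = F 0 := by
  simp only [mulVec, moran_row_zero hq, single_dotProduct, one_mul]

theorem mulVec_moran_last (hq : q (Fin.last N) = 1) (F : Fin (N+1) → ℝ) :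
    (moran N q *ᵥ F) (Fin.last N) = F (Fin.last N) := by
  simp only [mulVec, moran_row_last hq, single_dotProduct, one_mul]

theorem moran_row_of_succ_eq (hj : (j : ℕ) + 1 = i) (hk : (i : ℕ) + 1 = k) :
    moran N q i =
      Pi.single j ((i : ℕ) / N * (1 - q i) : ℝ) +
      Pi.single i (1 - (i : ℕ) / N * (1 - q i) - (N - (i : ℕ)) / N * q i : ℝ) +
      Pi.single k ((N - (i : ℕ)) / N * q i : ℝ) := by
  funext l
  simp only [moran, Pi.add_apply, Pi.single_apply, Fin.ext_iff]
  split_ifs <;> first | omega | simp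

theorem mulVec_moran_of_succ_eq (F : Fin (N+1) → ℝ) (hj : (j : ℕ) + 1 = i)
    (hk : (i : ℕ) + 1 = k) :
    (moran N q *ᵥ F) i =
      F i + ((N - (i : ℕ)) * q i * (F k - F i) - (i : ℕ) * (1 - q i) * (F i - F j)) / N := by
  simp only [mulVec, moran_row_of_succ_eq hj hk, add_dotProduct, single_dotProduct]
  ring

theorem mulVec_moran_eq_self_iff (F : Fin (N+1) → ℝ) (hj : (j : ℕ) + 1 = i)
    (hk : (i : ℕ) + 1 = k) :
    (moran N q *ᵥ F) i = F i ↔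
      q i * ((i : ℕ) * (F i - F j) + (N - (i : ℕ)) * (F k - F i)) =
        (i : ℕ) * (F i - F j) := by
  have hN : (N : ℝ) ≠ 0 := Nat.cast_ne_zero.2 (by omega)
  rw [mulVec_moran_of_succ_eq F hj hk, add_eq_left, div_eq_zero_iff, or_iff_left hN]
  constructor <;> intro h <;> linear_combination h

theorem StrictMono.weighted_increments_pos {F : Fin (N+1) → ℝ} (hF : StrictMono F)
    (hj : (j : ℕ) + 1 = i) (hk : (i : ℕ) + 1 = k) :
    0 < (i : ℕ) * (F i - F j) ∧ 0 < (N - (i : ℕ)) * (F k - F i) := by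
  have hdown : F j < F i := hF (Fin.lt_def.2 (by omega))
  have hup : F i < F k := hF (Fin.lt_def.2 (by omega))
  have hi0 : (0 : ℝ) < (i : ℕ) := by exact_mod_cast (show 0 < (i : ℕ) by omega)
  have hiN : ((i : ℕ) : ℝ) < N := by exact_mod_cast (show (i : ℕ) < N by omega)
  exact ⟨mul_pos hi0 (by linarith), mul_pos (by linarith) (by linarith)⟩

theorem mulVec_moran_eq_self_iff_eq_div {F : Fin (N+1) → ℝ} (hF : StrictMono F)
    (hj : (j : ℕ) + 1 = i) (hk : (i : ℕ) + 1 = k) :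
    (moran N q *ᵥ F) i = F i ↔
      q i = (i : ℕ) * (F i - F j) /
        ((i : ℕ) * (F i - F j) + (N - (i : ℕ)) * (F k - F i)) := by
  obtain ⟨hdown, hup⟩ := hF.weighted_increments_pos hj hk
  rw [eq_div_iff (by positivity), mulVec_moran_eq_self_iff F hj hk]

theorem Fin.eq_zero_or_eq_last_or_pos_lt (i : Fin (N+1)) :
    i = 0 ∨ i = Fin.last N ∨ 0 < (i : ℕ) ∧ (i : ℕ) < N := by
  simp only [Fin.ext_iff, Fin.val_zero, Fin.val_last]
  omega

end

theorem stmt9 (N : ℕ) (F : Fin (N+1) → ℝ)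
    (hmono : StrictMono F)
    (p : Fin (N+1) → ℝ)
    (hp0 : p 0 = 0) (hpN : p (Fin.last N) = 1)
    (hpdef : ∀ i : Fin (N+1), (h1 : 0 < (i : ℕ)) → (h2 : (i : ℕ) < N) →
      p i = ((i : ℕ) : ℝ) * (F i - F ⟨(i : ℕ) - 1, by omega⟩) /
        (((i : ℕ) : ℝ) * (F i - F ⟨(i : ℕ) - 1, by omega⟩) +
          ((N : ℝ) - ((i : ℕ) : ℝ)) * (F ⟨(i : ℕ) + 1, by omega⟩ - F i))) :
    (∀ i : Fin (N+1), 0 < (i : ℕ) → (i : ℕ) < N → 0 < p i ∧ p i < 1) ∧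
    (moran N p).mulVec F = F ∧
    (∀ q : Fin (N+1) → ℝ, q 0 = 0 → q (Fin.last N) = 1 →
      (moran N q).mulVec F = F → q = p) := by
  have hfixed_iff : ∀ (q : Fin (N+1) → ℝ) (i : Fin (N+1)), 0 < (i : ℕ) → (i : ℕ) < N →
      ((moran N q).mulVec F i = F i ↔ q i = p i) := fun q i h1 h2 => by
    rw [hpdef i h1 h2]
    exact mulVec_moran_eq_self_iff_eq_div hmono (Nat.sub_add_cancel h1) rfl
  refine ⟨fun i h1 h2 => ?_, ?_, fun q hq0 hqN hq => ?_⟩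
  · obtain ⟨hdown, hup⟩ := hmono.weighted_increments_pos
      (j := ⟨i - 1, by omega⟩) (k := ⟨i + 1, by omega⟩) (Nat.sub_add_cancel h1) rfl
    rw [hpdef i h1 h2]
    exact ⟨div_pos hdown (by linarith), (div_lt_one (by linarith)).2 (by linarith)⟩
  · funext i
    rcases Fin.eq_zero_or_eq_last_or_pos_lt i with rfl | rfl | ⟨h1, h2⟩
    · exact mulVec_moran_zero hp0 F
    · exact mulVec_moran_last hpN F
    · exact (hfixed_iff p i h1 h2).2 rfl
  · funext i
    rcases Fin.eq_zero_or_eq_last_or_pos_lt i with rfl | rfl | ⟨h1, h2⟩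
    · rw [hq0, hp0]
    · rw [hqN, hpN]
    · exact (hfixed_iff q i h1 h2).1 (congrFun hq i)
end

section
/- Let a,b,c,d,α,β > 0 and define p_i = i(ai + b(N−i) + α) / [ i(ai + b(N−i) + α) + (N−i)(ci + d(N−i) + β) ] for i = 0,...,N. Then the sequence (p_i) is strictly increasing in i. -/
set_option maxHeartbeats 1000000

lemma stmt15_key (u v a b c d α β : ℝ) (hu : 0 ≤ u) (hv : 0 ≤ v)
    (ha : 0 < a) (hb : 0 < b) (hc : 0 < c) (hd : 0 < d) (hα : 0 < α) (hβ : 0 < β) :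
    u * v * (a * u + b * v + b + α) * (c * u + c + d * v + β) <
      (u + 1) * (v + 1) * (a * u + a + b * v + α) * (c * u + d * v + d + β) := by
  have hE : (u + 1) * (v + 1) * (a * u + a + b * v + α) * (c * u + d * v + d + β)
      - u * v * (a * u + b * v + b + α) * (c * u + c + d * v + β) =
      α * β + d * α + a * β + a * d + v * (α * β) + v * (2 * d * α) + v * (b * β) + v * (b * d) + v * (a * β) + v * (2 * a * d) + v^2 * (d * α) + v^2 * (b * β) + v^2 * (2 * b * d) + v^2 * (a * d) + v^3 * (b * d) + u * (α * β) + u * (d * α) + u * (c * α) + u * (2 * a * β) + u * (2 * a * d) + u * (a * c) + u * v * (2 * d * α) + u * v * (b * d) + u * v * (2 * a * β) + u * v * (4 * a * d) + u * v * (a * c) + u * v^2 * (b * d) + u * v^2 * (2 * a * d) + u^2 * (c * α) + u^2 * (a * β) + u^2 * (a * d) + u^2 * (2 * a * c) + u^2 * v * (2 * a * d) + u^2 * v * (a * c) + u^3 * (a * c) := by ring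
  have h0 : (0:ℝ) < α * β := by positivity
  have h1 : (0:ℝ) < d * α := by positivity
  have h2 : (0:ℝ) < a * β := by positivity
  have h3 : (0:ℝ) < a * d := by positivity
  have h4 : (0:ℝ) ≤ v * (α * β) := mul_nonneg hv (by positivity)
  have h5 : (0:ℝ) ≤ v * (2 * d * α) := mul_nonneg hv (by positivity)
  have h6 : (0:ℝ) ≤ v * (b * β) := mul_nonneg hv (by positivity)
  have h7 : (0:ℝ) ≤ v * (b * d) := mul_nonneg hv (by positivity)
  have h8 : (0:ℝ) ≤ v * (a * β) := mul_nonneg hv (by positivity)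
  have h9 : (0:ℝ) ≤ v * (2 * a * d) := mul_nonneg hv (by positivity)
  have h10 : (0:ℝ) ≤ v^2 * (d * α) := mul_nonneg (pow_nonneg hv 2) (by positivity)
  have h11 : (0:ℝ) ≤ v^2 * (b * β) := mul_nonneg (pow_nonneg hv 2) (by positivity)
  have h12 : (0:ℝ) ≤ v^2 * (2 * b * d) := mul_nonneg (pow_nonneg hv 2) (by positivity)
  have h13 : (0:ℝ) ≤ v^2 * (a * d) := mul_nonneg (pow_nonneg hv 2) (by positivity)
  have h14 : (0:ℝ) ≤ v^3 * (b * d) := mul_nonneg (pow_nonneg hv 3) (by positivity)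
  have h15 : (0:ℝ) ≤ u * (α * β) := mul_nonneg hu (by positivity)
  have h16 : (0:ℝ) ≤ u * (d * α) := mul_nonneg hu (by positivity)
  have h17 : (0:ℝ) ≤ u * (c * α) := mul_nonneg hu (by positivity)
  have h18 : (0:ℝ) ≤ u * (2 * a * β) := mul_nonneg hu (by positivity)
  have h19 : (0:ℝ) ≤ u * (2 * a * d) := mul_nonneg hu (by positivity)
  have h20 : (0:ℝ) ≤ u * (a * c) := mul_nonneg hu (by positivity)
  have h21 : (0:ℝ) ≤ u * v * (2 * d * α) := mul_nonneg (mul_nonneg hu hv) (by positivity)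
  have h22 : (0:ℝ) ≤ u * v * (b * d) := mul_nonneg (mul_nonneg hu hv) (by positivity)
  have h23 : (0:ℝ) ≤ u * v * (2 * a * β) := mul_nonneg (mul_nonneg hu hv) (by positivity)
  have h24 : (0:ℝ) ≤ u * v * (4 * a * d) := mul_nonneg (mul_nonneg hu hv) (by positivity)
  have h25 : (0:ℝ) ≤ u * v * (a * c) := mul_nonneg (mul_nonneg hu hv) (by positivity)
  have h26 : (0:ℝ) ≤ u * v^2 * (b * d) := mul_nonneg (mul_nonneg hu (pow_nonneg hv 2)) (by positivity)
  have h27 : (0:ℝ) ≤ u * v^2 * (2 * a * d) := mul_nonneg (mul_nonneg hu (pow_nonneg hv 2)) (by positivity)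
  have h28 : (0:ℝ) ≤ u^2 * (c * α) := mul_nonneg (pow_nonneg hu 2) (by positivity)
  have h29 : (0:ℝ) ≤ u^2 * (a * β) := mul_nonneg (pow_nonneg hu 2) (by positivity)
  have h30 : (0:ℝ) ≤ u^2 * (a * d) := mul_nonneg (pow_nonneg hu 2) (by positivity)
  have h31 : (0:ℝ) ≤ u^2 * (2 * a * c) := mul_nonneg (pow_nonneg hu 2) (by positivity)
  have h32 : (0:ℝ) ≤ u^2 * v * (2 * a * d) := mul_nonneg (mul_nonneg (pow_nonneg hu 2) hv) (by positivity)
  have h33 : (0:ℝ) ≤ u^2 * v * (a * c) := mul_nonneg (mul_nonneg (pow_nonneg hu 2) hv) (by positivity)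
  have h34 : (0:ℝ) ≤ u^3 * (a * c) := mul_nonneg (pow_nonneg hu 3) (by positivity)
  linarith [h0, h1, h2, h3, h4, h5, h6, h7, h8, h9, h10, h11, h12, h13, h14, h15, h16, h17, h18, h19, h20, h21, h22, h23, h24, h25, h26, h27, h28, h29, h30, h31, h32, h33, h34]
lemma stmt15_step (u v a b c d α β : ℝ) (hu : 0 ≤ u) (hv : 0 ≤ v)
    (ha : 0 < a) (hb : 0 < b) (hc : 0 < c) (hd : 0 < d) (hα : 0 < α) (hβ : 0 < β) :
    u * (a * u + b * (v + 1) + α) /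
      (u * (a * u + b * (v + 1) + α) + (v + 1) * (c * u + d * (v + 1) + β)) <
    (u + 1) * (a * (u + 1) + b * v + α) /
      ((u + 1) * (a * (u + 1) + b * v + α) + v * (c * (u + 1) + d * v + β)) := by
  have hA1 : 0 < a * u + b * (v + 1) + α := by nlinarith
  have hB1 : 0 < c * u + d * (v + 1) + β := by nlinarith
  have hA2 : 0 < a * (u + 1) + b * v + α := by nlinarith
  have hB2 : 0 < c * (u + 1) + d * v + β := by nlinarith
  have hD1 : 0 < u * (a * u + b * (v + 1) + α) + (v + 1) * (c * u + d * (v + 1) + β) := by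
    have := mul_nonneg hu hA1.le
    have : 0 < (v + 1) * (c * u + d * (v + 1) + β) := mul_pos (by linarith) hB1
    nlinarith [mul_nonneg hu hA1.le]
  have hD2 : 0 < (u + 1) * (a * (u + 1) + b * v + α) + v * (c * (u + 1) + d * v + β) := by
    have h1 : 0 < (u + 1) * (a * (u + 1) + b * v + α) := mul_pos (by linarith) hA2
    nlinarith [mul_nonneg hv hB2.le]
  rw [div_lt_div_iff₀ hD1 hD2]
  nlinarith [stmt15_key u v a b c d α β hu hv ha hb hc hd hα hβ]

theorem stmt15 (N : ℕ) (hN : 1 ≤ N) (a b c d α β : ℝ)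
    (ha : 0 < a) (hb : 0 < b) (hc : 0 < c) (hd : 0 < d) (hα : 0 < α) (hβ : 0 < β)
    (p : ℕ → ℝ)
    (hp : ∀ i : ℕ, i ≤ N → p i =
      ((i : ℝ) * (a * i + b * ((N : ℝ) - i) + α)) /
        ((i : ℝ) * (a * i + b * ((N : ℝ) - i) + α) +
          ((N : ℝ) - i) * (c * i + d * ((N : ℝ) - i) + β))) :
    ∀ i j : ℕ, i < j → j ≤ N → p i < p j := by
  have step : ∀ i : ℕ, i + 1 ≤ N → p i < p (i + 1) := by
    intro i hi
    rw [hp i (by omega), hp (i + 1) hi]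
    have hiR : (i : ℝ) + 1 ≤ (N : ℝ) := by exact_mod_cast hi
    set u : ℝ := (i : ℝ) with hu_def
    have hu : 0 ≤ u := by positivity
    set v : ℝ := (N : ℝ) - u - 1 with hv_def
    have hv : 0 ≤ v := by rw [hv_def]; linarith
    have e2 : ((i + 1 : ℕ) : ℝ) = u + 1 := by push_cast; ring
    rw [e2]
    have e1 : (N : ℝ) - u = v + 1 := by rw [hv_def]; ring
    have e3 : (N : ℝ) - (u + 1) = v := by rw [hv_def]; ring
    rw [e1, e3]
    exact stmt15_step u v a b c d α β hu hv ha hb hc hd hα hβ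
  intro i j hij hjN
  induction j with
  | zero => omega
  | succ k ih =>
    rcases Nat.lt_succ_iff_lt_or_eq.mp hij with h | h
    · exact lt_trans (ih h (by omega)) (step k (by omega))
    · subst h; exact step i hjN
end

section
/- Let φ: [0,1] → R be continuously differentiable and increasing with 0 < K_- ≤ φ'(x) ≤ K_+ on [0,1]. If p ∈ R^{N+1} is any vector satisfying Υ_φ^N(p_i) = φ(i/N) for all i (where Υ_φ^N is the Bernstein polynomial of φ at resolution N), then |i/N − p_i| ≤ 9K_+ / (4 K_- N^{1/2}) for every i. -/
/-!
Write `Υ` for the Bernstein operator. Since `Υ φ (p i) = φ (i / N)`, the distance from `i / N`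
to `p i` is controlled through `φ` from both sides: the lower bound `K₋ ≤ φ'` gives
`K₋ |i/N - p i| ≤ |φ (i/N) - φ (p i)| = |Υ φ (p i) - φ (p i)|`, and for the `K₊`-Lipschitz
function `φ` the Bernstein error at `x` is at most `K₊ ∑ |j/N - x| b_j(x)`, which Cauchy–Schwarz
and the variance identity `∑ (j/N - x)² b_j(x) = x (1 - x) / N` bound by `K₊ / (2 √N)`.
The resulting bound `K₊ / (2 K₋ √N)` is sharper than `9 K₊ / (4 K₋ √N)`.
-/

open Finset

theorem bernsteinPolynomial.eval_eq {R : Type*} [CommRing R] (n ν : ℕ) (x : R) :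
    (bernsteinPolynomial R n ν).eval x = n.choose ν * x ^ ν * (1 - x) ^ (n - ν) := by
  simp [bernsteinPolynomial]

section Bernstein

variable (N : ℕ) (x : ℝ)

theorem sum_bernsteinPolynomial_eval :
    ∑ j ∈ range (N + 1), (bernsteinPolynomial ℝ N j).eval x = 1 := by
  rw [← Polynomial.eval_finsetSum, bernsteinPolynomial.sum, Polynomial.eval_one]

theorem sum_sq_mul_bernsteinPolynomial_eval (hN : N ≠ 0) :
    ∑ j ∈ range (N + 1), ((j : ℝ) / N - x) ^ 2 * (bernsteinPolynomial ℝ N j).eval x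
      = x * (1 - x) / N := by
  have h := congrArg (Polynomial.eval x) (bernsteinPolynomial.variance ℝ N)
  simp only [Polynomial.eval_finsetSum, Polynomial.eval_mul, Polynomial.eval_pow,
    Polynomial.eval_sub, Polynomial.eval_X, Polynomial.eval_natCast,
    Polynomial.eval_one, nsmul_eq_mul] at h
  have hN' : (N : ℝ) ≠ 0 := Nat.cast_ne_zero.2 hN
  calc _ = (∑ j ∈ range (N + 1), ((N : ℝ) * x - j) ^ 2 * (bernsteinPolynomial ℝ N j).eval x)
          / (N : ℝ) ^ 2 := by
        rw [sum_div]
        refine sum_congr rfl fun j _ => ?_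
        field_simp
        ring
    _ = x * (1 - x) / N := by
        rw [h]
        field_simp

variable {N x}

theorem bernsteinPolynomial_eval_nonneg (hx : x ∈ Set.Icc (0 : ℝ) 1) (j : ℕ) :
    0 ≤ (bernsteinPolynomial ℝ N j).eval x := by
  have := hx.1
  have : 0 ≤ 1 - x := sub_nonneg.2 hx.2
  rw [bernsteinPolynomial.eval_eq]
  positivity

theorem sum_abs_mul_bernsteinPolynomial_eval_le (hN : N ≠ 0) (hx : x ∈ Set.Icc (0 : ℝ) 1) :
    ∑ j ∈ range (N + 1), |(j : ℝ) / N - x| * (bernsteinPolynomial ℝ N j).eval x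
      ≤ 1 / (2 * Real.sqrt N) := by
  have hb := bernsteinPolynomial_eval_nonneg (N := N) hx
  -- Cauchy–Schwarz against the probability weights, then `x (1 - x) ≤ 1/4`
  have hCS := sum_sq_le_sum_mul_sum_of_sq_le_mul (range (N + 1))
    (r := fun j => |(j : ℝ) / N - x| * (bernsteinPolynomial ℝ N j).eval x)
    (fun j _ => hb j) (fun j _ => mul_nonneg (sq_nonneg ((j : ℝ) / N - x)) (hb j))
    (fun j _ => le_of_eq (by rw [mul_pow, sq_abs]; ring))
  rw [sum_bernsteinPolynomial_eval, one_mul, sum_sq_mul_bernsteinPolynomial_eval N x hN] at hCS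
  have hNpos : (0 : ℝ) < N := Nat.cast_pos.2 (Nat.pos_of_ne_zero hN)
  have hquarter : x * (1 - x) / N ≤ (1 / (2 * Real.sqrt N)) ^ 2 := by
    rw [div_pow, mul_pow, Real.sq_sqrt hNpos.le, div_le_div_iff₀ hNpos (by positivity)]
    nlinarith [sq_nonneg (1 - 2 * x)]
  exact abs_le_of_sq_le_sq' (hCS.trans hquarter) (by positivity) |>.2

theorem abs_sum_mul_bernsteinPolynomial_eval_sub_le {f : ℝ → ℝ} {L : ℝ} (hL : 0 ≤ L)
    (hf : ∀ a ∈ Set.Icc (0 : ℝ) 1, ∀ b ∈ Set.Icc (0 : ℝ) 1, |f a - f b| ≤ L * |a - b|)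
    (hN : N ≠ 0) (hx : x ∈ Set.Icc (0 : ℝ) 1) :
    |∑ j ∈ range (N + 1), f (j / N) * (bernsteinPolynomial ℝ N j).eval x - f x|
      ≤ L / (2 * Real.sqrt N) := by
  have hb := bernsteinPolynomial_eval_nonneg (N := N) hx
  have hnode : ∀ j ∈ range (N + 1), (j : ℝ) / N ∈ Set.Icc (0 : ℝ) 1 := fun j hj =>
    ⟨by positivity, div_le_one_of_le₀ (by exact_mod_cast mem_range_succ_iff.1 hj) (by positivity)⟩
  calc |∑ j ∈ range (N + 1), f (j / N) * (bernsteinPolynomial ℝ N j).eval x - f x|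
      = |∑ j ∈ range (N + 1), (f (j / N) - f x) * (bernsteinPolynomial ℝ N j).eval x| := by
        simp only [sub_mul, sum_sub_distrib, ← mul_sum, sum_bernsteinPolynomial_eval, mul_one]
    _ ≤ ∑ j ∈ range (N + 1), L * (|(j : ℝ) / N - x| * (bernsteinPolynomial ℝ N j).eval x) := by
        refine (abs_sum_le_sum_abs _ _).trans (sum_le_sum fun j hj => ?_)
        rw [abs_mul, abs_of_nonneg (hb j), ← mul_assoc]
        exact mul_le_mul_of_nonneg_right (hf _ (hnode j hj) x hx) (hb j)
    _ ≤ L * (1 / (2 * Real.sqrt N)) := by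
        rw [← mul_sum]
        exact mul_le_mul_of_nonneg_left (sum_abs_mul_bernsteinPolynomial_eval_le hN hx) hL
    _ = L / (2 * Real.sqrt N) := mul_one_div L _

end Bernstein

theorem Convex.mul_abs_sub_le_abs_image_sub {D : Set ℝ} (hD : Convex ℝ D) {f f' : ℝ → ℝ} {K : ℝ}
    (hf : ∀ x ∈ D, HasDerivWithinAt f (f' x) D x) (hK : ∀ x ∈ D, K ≤ f' x)
    {x y : ℝ} (hx : x ∈ D) (hy : y ∈ D) : K * |x - y| ≤ |f x - f y| := by
  have hmono : MonotoneOn (fun t => f t - K * t) D := by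
    have hg : ∀ t ∈ D, HasDerivWithinAt (fun t => f t - K * t) (f' t - K) D t := fun t ht =>
      (hf t ht).sub (hasDerivAt_const_mul K).hasDerivWithinAt
    exact monotoneOn_of_hasDerivWithinAt_nonneg hD (fun t ht => (hg t ht).continuousWithinAt)
      (fun t ht => (hg t (interior_subset ht)).mono interior_subset)
      (fun t ht => sub_nonneg.2 (hK t (interior_subset ht)))
  wlog hyx : y ≤ x generalizing x y
  · rw [abs_sub_comm x, abs_sub_comm (f x)]
    exact this hy hx (le_of_not_ge hyx)
  have := hmono hy hx hyx
  rw [abs_of_nonneg (sub_nonneg.2 hyx)]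
  exact (by linarith : K * (x - y) ≤ f x - f y).trans (le_abs_self _)

theorem stmt17_general (N : ℕ) (hN : 1 ≤ N) (φ φ' : ℝ → ℝ) (Kminus Kplus : ℝ)
    (hK : 0 < Kminus)
    (hderiv : ∀ x ∈ Set.Icc (0 : ℝ) 1, HasDerivWithinAt φ (φ' x) (Set.Icc (0 : ℝ) 1) x)
    (hlow : ∀ x ∈ Set.Icc (0 : ℝ) 1, Kminus ≤ φ' x)
    (hup : ∀ x ∈ Set.Icc (0 : ℝ) 1, φ' x ≤ Kplus)
    (p : Fin (N+1) → ℝ) (hp : ∀ i, p i ∈ Set.Icc (0 : ℝ) 1)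
    (hfix : ∀ i : Fin (N+1),
      ∑ j ∈ Finset.range (N+1),
          φ ((j : ℝ) / N) * (N.choose j : ℝ) * (p i) ^ j * (1 - p i) ^ (N - j)
        = φ (((i : ℕ) : ℝ) / N)) :
    ∀ i : Fin (N+1),
      |((i : ℕ) : ℝ) / N - p i| ≤ 9 * Kplus / (4 * Kminus * Real.sqrt N) := by
  intro i
  have hN0 : N ≠ 0 := Nat.one_le_iff_ne_zero.1 hN
  have hKplus : 0 < Kplus := hK.trans_le ((hlow 0 (by simp)).trans (hup 0 (by simp)))
  have hlip : ∀ a ∈ Set.Icc (0 : ℝ) 1, ∀ b ∈ Set.Icc (0 : ℝ) 1, |φ a - φ b| ≤ Kplus * |a - b| :=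
    fun a ha b hb => by
      simpa only [Real.norm_eq_abs] using
        (convex_Icc (0 : ℝ) 1).norm_image_sub_le_of_norm_hasDerivWithin_le hderiv
          (fun t ht => abs_le.2 ⟨by linarith [hlow t ht], hup t ht⟩) hb ha
  have hnode : ((i : ℕ) : ℝ) / N ∈ Set.Icc (0 : ℝ) 1 :=
    ⟨by positivity, div_le_one_of_le₀ (by exact_mod_cast i.is_le) (by positivity)⟩
  have hbernstein : ∑ j ∈ range (N + 1), φ (j / N) * (bernsteinPolynomial ℝ N j).eval (p i)
      = φ (((i : ℕ) : ℝ) / N) := by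
    simp_rw [bernsteinPolynomial.eval_eq, ← mul_assoc]
    exact hfix i
  have hclose : Kminus * |((i : ℕ) : ℝ) / N - p i| ≤ Kplus / (2 * Real.sqrt N) :=
    calc Kminus * |((i : ℕ) : ℝ) / N - p i| ≤ |φ (((i : ℕ) : ℝ) / N) - φ (p i)| :=
          (convex_Icc 0 1).mul_abs_sub_le_abs_image_sub hderiv hlow hnode (hp i)
      _ ≤ Kplus / (2 * Real.sqrt N) := by
          rw [← hbernstein]
          exact abs_sum_mul_bernsteinPolynomial_eval_sub_le hKplus.le hlip hN0 (hp i)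
  have hsqrt : 0 < Real.sqrt N := Real.sqrt_pos.2 (by exact_mod_cast hN)
  rw [le_div_iff₀ (by positivity)]
  rw [le_div_iff₀ (by positivity)] at hclose
  nlinarith

theorem stmt17 (N : ℕ) (hN : 1 ≤ N) (φ φ' : ℝ → ℝ) (Kminus Kplus : ℝ)
    (hK : 0 < Kminus)
    (hderiv : ∀ x ∈ Set.Icc (0 : ℝ) 1, HasDerivWithinAt φ (φ' x) (Set.Icc (0 : ℝ) 1) x)
    (hcont : ContinuousOn φ' (Set.Icc (0 : ℝ) 1))
    (hlow : ∀ x ∈ Set.Icc (0 : ℝ) 1, Kminus ≤ φ' x)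
    (hup : ∀ x ∈ Set.Icc (0 : ℝ) 1, φ' x ≤ Kplus)
    (p : Fin (N+1) → ℝ) (hp : ∀ i, p i ∈ Set.Icc (0 : ℝ) 1)
    (hfix : ∀ i : Fin (N+1),
      ∑ j ∈ Finset.range (N+1),
          φ ((j : ℝ) / N) * (N.choose j : ℝ) * (p i) ^ j * (1 - p i) ^ (N - j)
        = φ (((i : ℕ) : ℝ) / N)) :
    ∀ i : Fin (N+1),
      |((i : ℕ) : ℝ) / N - p i| ≤ 9 * Kplus / (4 * Kminus * Real.sqrt N) :=
  stmt17_general N hN φ φ' Kminus Kplus hK hderiv hlow hup p hp hfix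
end

section
/- Let M be a Kimura matrix and T the lower-triangular all-ones matrix (T_{ij}=1 for i≥j). Write T^{-1} M T in block form as [[1, 0],[0, L]] with L an N×N matrix. Then the all-ones row vector is a left eigenvector of L with eigenvalue 1; that is, for every column j in {1,...,N}, sum_{i=1}^N (T^{-1} M T)_{ij} = 1. -/
open Finset

/-- The lower triangular all-ones matrix `T` with `T i j = 1` for `i ≥ j`. -/
def Tmat (N : ℕ) : Matrix (Fin (N+1)) (Fin (N+1)) ℝ :=
  fun i j => if j ≤ i then 1 else 0

/-- The inverse of `T`: ones on the diagonal and `-1` on the subdiagonal. -/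
def Tinv (N : ℕ) : Matrix (Fin (N+1)) (Fin (N+1)) ℝ :=
  fun i j => if i = j then 1 else if (j : ℕ) + 1 = (i : ℕ) then -1 else 0

/-!
The columns of `T⁻¹` sum to `0`, except the last one, which sums to `1`; so summing any column
of `T⁻¹ (M T)` over all rows gives the entry of `M T` in row `N`, and dropping row `0` subtracts
the entry in row `0`. Since the states `0` and `N` are absorbing, rows `0` and `N` of `M T` are
rows `0` and `N` of `T`, which gives `1 - 0` for `j ≠ 0`.
-/

theorem Matrix.mul_apply_of_row_eq_single {m l n R : Type*} [Fintype l] [DecidableEq l]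
    [NonAssocSemiring R] (A : Matrix m l R) (B : Matrix l n R) {i : m} {k : l}
    (hA : ∀ c, A i c = if c = k then 1 else 0) (j : n) :
    (A * B) i j = B k j := by
  simp [Matrix.mul_apply, hA]

theorem Tinv_apply_last (N : ℕ) (i : Fin (N+1)) :
    Tinv N i (Fin.last N) = if i = Fin.last N then 1 else 0 := by
  have : (i : ℕ) ≠ N + 1 := by have := i.isLt; omega
  simp [Tinv, eq_comm, this]

theorem Tinv_apply_castSucc (N : ℕ) (i : Fin (N+1)) (k : Fin N) :
    Tinv N i k.castSucc = (if i = k.castSucc then 1 else 0) - (if i = k.succ then 1 else 0) := by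
  by_cases h : i = k.succ
  · simp [Tinv, h, Fin.ext_iff]
  · have h' : (i : ℕ) ≠ k + 1 := fun h' => h (Fin.ext h')
    simp [Tinv, h, h', Fin.ext_iff, eq_comm]

theorem sum_Tinv_apply_col (N : ℕ) (k : Fin (N+1)) :
    ∑ i, Tinv N i k = if k = Fin.last N then 1 else 0 := by
  induction k using Fin.lastCases with
  | last => simp [Tinv_apply_last]
  | cast k => simp [Tinv_apply_castSucc, (Fin.castSucc_lt_last k).ne]

theorem Tinv_mul_apply_zero {n : Type*} (N : ℕ) (B : Matrix (Fin (N+1)) n ℝ) (j : n) :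
    (Tinv N * B) 0 j = B 0 j :=
  (Tinv N).mul_apply_of_row_eq_single B (fun c => by simp [Tinv, eq_comm]) j

theorem sum_Tinv_mul_apply {n : Type*} (N : ℕ) (B : Matrix (Fin (N+1)) n ℝ) (j : n) :
    ∑ i, (Tinv N * B) i j = B (Fin.last N) j := by
  calc ∑ i, (Tinv N * B) i j = ∑ k, (∑ i, Tinv N i k) * B k j := by
        simp only [Matrix.mul_apply, Finset.sum_mul]
        exact Finset.sum_comm
    _ = B (Fin.last N) j := by simp [sum_Tinv_apply_col]

theorem sum_erase_zero_Tinv_mul_apply {n : Type*} (N : ℕ) (B : Matrix (Fin (N+1)) n ℝ)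
    (j : n) :
    ∑ i ∈ univ.erase 0, (Tinv N * B) i j = B (Fin.last N) j - B 0 j := by
  rw [Finset.sum_erase_eq_sub (mem_univ 0), sum_Tinv_mul_apply, Tinv_mul_apply_zero]

theorem stmt19_general (N : ℕ) (M : Matrix (Fin (N+1)) (Fin (N+1)) ℝ)
    (habs0 : ∀ j, M 0 j = if j = 0 then 1 else 0)
    (habsN : ∀ j, M (Fin.last N) j = if j = Fin.last N then 1 else 0) :
    ∀ j : Fin (N+1), j ≠ 0 →
      ∑ i ∈ Finset.univ.erase (0 : Fin (N+1)), (Tinv N * M * Tmat N) i j = 1 := by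
  intro j hj
  rw [Matrix.mul_assoc, sum_erase_zero_Tinv_mul_apply,
    M.mul_apply_of_row_eq_single _ habsN, M.mul_apply_of_row_eq_single _ habs0]
  simp [Tmat, Fin.le_last, hj]

theorem stmt19 (N : ℕ) (M : Matrix (Fin (N+1)) (Fin (N+1)) ℝ)
    (hM0 : ∀ i j, 0 ≤ M i j) (hM1 : ∀ i, ∑ j, M i j = 1)
    (habs0 : ∀ j, M 0 j = if j = 0 then 1 else 0)
    (habsN : ∀ j, M (Fin.last N) j = if j = Fin.last N then 1 else 0) :
    ∀ j : Fin (N+1), j ≠ 0 →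
      ∑ i ∈ Finset.univ.erase (0 : Fin (N+1)), (Tinv N * M * Tmat N) i j = 1 :=
  stmt19_general N M habs0 habsN
end
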